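/- Let Γ be a uniform ranked poset whose maximum element x has rank d+1 (so Γ = Γ_x), and let R = R(Γ). For every 0 ≤ k < d, the set {s ∈ R(k,k) : r_x(d−k−1)·s = 0} equals the one-dimensional subspace F·r_x(d−k) (in particular r_x(d−k) ≠ 0 in R); moreover R(d,d) = F·r_x is one-dimensional. Equivalently, H^k(R(·,k), d_Γ) ≅ F for all 0 ≤ k ≤ d. -/

import Mathlib

set_option linter.unusedSectionVars false
set_option linter.unusedVariables false

open scoped Classical

variable {Γ : Type*} [PartialOrder Γ] [OrderBot Γ] [Fintype Γ]

/-- `rk` is a rank function for the finite poset `Γ` (with least element `⊥`):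
the bottom has rank `0` and ranks increase by one along covering relations.
Equivalently, all maximal chains in `[⊥, x]` have the same length `rk x`. -/
def IsRanked (rk : Γ → ℕ) : Prop :=
  rk ⊥ = 0 ∧ ∀ a b : Γ, a ⋖ b → rk b = rk a + 1

/-- `rankSet rk x n` is the set `S_x(n) = {y ≤ x : rk x - rk y = n}`. -/
def rankSet (rk : Γ → ℕ) (x : Γ) (n : ℕ) : Set Γ := {y | y ≤ x ∧ rk y + n = rk x}

/-- `Γ` is uniform: for each `a`, the equivalence relation on `S_a(1)` generated by
`b ∼ c` whenever `S_b(1) ∩ S_c(1) ≠ ∅` has at most one equivalence class. -/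
def Uniform (rk : Γ → ℕ) : Prop :=
  ∀ a b c : Γ, b ∈ rankSet rk a 1 → c ∈ rankSet rk a 1 →
    Relation.EqvGen
      (fun u v => u ∈ rankSet rk a 1 ∧ v ∈ rankSet rk a 1 ∧
        (rankSet rk u 1 ∩ rankSet rk v 1).Nonempty)
      b c

/-- `Γ' = Γ \ {⊥}`, indexing the generators `r_x`. -/
abbrev Vert (Γ : Type*) [PartialOrder Γ] [OrderBot Γ] := {x : Γ // x ≠ (⊥ : Γ)}

variable (F : Type*) [Field F]

/-- The generator `r_x` of the tensor algebra `T(W)` on the vector space `W` with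
basis `{r_x : x ∈ Γ'}`, realized as the free algebra on `Γ'`. -/
noncomputable def gen (x : Vert Γ) : FreeAlgebra F (Vert Γ) := FreeAlgebra.ι F x

/-- `r_x(n) = Σ_{y ∈ S_x(n)} r_y ∈ W` (which is `0` for `n ≥ rk x`). -/
noncomputable def rxn (rk : Γ → ℕ) (x : Γ) (n : ℕ) : FreeAlgebra F (Vert Γ) :=
  ∑ y ∈ Finset.univ.filter (fun y : Vert Γ => y.1 ∈ rankSet rk x n), gen F y

/-- The quadratic relations spanning `I_2`: `r_x ⊗ r_y` for `y ∉ S_x(1)`, and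
`r_x ⊗ r_x(1)`, for `x, y ∈ Γ'`. -/
inductive GRel (F : Type*) [Field F] {Γ : Type*} [PartialOrder Γ] [OrderBot Γ]
    [Fintype Γ] (rk : Γ → ℕ) :
    FreeAlgebra F (Vert Γ) → FreeAlgebra F (Vert Γ) → Prop
  | mono (x y : Vert Γ) (h : y.1 ∉ rankSet rk x.1 1) : GRel F rk (gen F x * gen F y) 0
  | adj (x : Vert Γ) : GRel F rk (gen F x * rxn F rk x.1 1) 0

/-- The quadratic algebra `R(Γ) = T(W)/I`, where `I` is the two-sided ideal
generated by `I_2`. -/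
abbrev RGamma (rk : Γ → ℕ) := RingQuot (GRel F rk)

/-- The image of `r_x` in `R(Γ)`. -/
noncomputable def rbar (rk : Γ → ℕ) (x : Vert Γ) : RGamma F rk :=
  RingQuot.mkAlgHom F (GRel F rk) (gen F x)

/-- The image of `r_x(n)` in `R(Γ)`. -/
noncomputable def rxnbar (rk : Γ → ℕ) (x : Γ) (n : ℕ) : RGamma F rk :=
  RingQuot.mkAlgHom F (GRel F rk) (rxn F rk x n)

/-- The right ideal `r_x R = {r_x · s : s ∈ R}`, as an `F`-submodule of `R(Γ)`. -/
noncomputable def rIdeal (rk : Γ → ℕ) (x : Vert Γ) : Submodule F (RGamma F rk) :=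
  LinearMap.range (LinearMap.mulLeft F (rbar F rk x))

/-- `H_x(n) = Σ_{y ∈ Γ', y ∉ S_x(n)} r_y R`. -/
noncomputable def Hsub (rk : Γ → ℕ) (x : Γ) (n : ℕ) : Submodule F (RGamma F rk) :=
  ⨆ (y : Vert Γ) (_ : y.1 ∉ rankSet rk x n), rIdeal F rk y

/-- `d_Γ = Σ_{y ∈ Γ'} r_y ∈ R(Γ)`. -/
noncomputable def dGamma (rk : Γ → ℕ) : RGamma F rk := ∑ y : Vert Γ, rbar F rk y

/-- The degree-one component `W` of `T(W)`: the span of the generators `r_x`. -/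
noncomputable def Wsub : Submodule F (FreeAlgebra F (Vert Γ)) :=
  Submodule.span F (Set.range (gen F (Γ := Γ)))

/-- The graded component `R_m` of `R(Γ)`: the image of `W^{⊗m}`. -/
noncomputable def Rcomp (rk : Γ → ℕ) (m : ℕ) : Submodule F (RGamma F rk) :=
  Submodule.map (RingQuot.mkAlgHom F (GRel F rk)).toLinearMap ((Wsub F (Γ := Γ)) ^ m)

/-- The subspace `R(n,k) = Σ_{y ∈ Γ', rk y = n+1} r_y R_{n-k}` of `R(Γ)`. -/
noncomputable def Rnk (rk : Γ → ℕ) (n k : ℕ) : Submodule F (RGamma F rk) :=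
  ⨆ (y : Vert Γ) (_ : rk y.1 = n + 1),
    Submodule.map (LinearMap.mulLeft F (rbar F rk y)) (Rcomp F rk (n - k))

/-!
The relations give `r_x(n) r_x(n+1) = 0`, and `R(k,k)` is spanned by the `r_y` with
`rk y = k + 1`. For the converse, every functional `t` on `W ⊗ W` vanishing on `I_2` yields a
representation of `R` on `F ⊕ W ⊕ F` in which `r_z r_y` acts through `t z y`. With `t = 0` this
shows that the `r_y` are linearly independent; with `t = δ_z ⊗ (δ_y - δ_y')` it shows that
`r_x(n) · Σ c_y r_y = 0` forces `c` to be constant on `S_z(1)` for every `z ∈ S_x(n)`.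
Uniformity propagates this local constancy level by level, so `c` is constant on `S_x(n+1)`,
i.e. `Σ c_y r_y ∈ F · r_x(n+1)`.
-/

open Finset

section RankedPoset

variable {rk : Γ → ℕ}

theorem IsRanked.strictMono (hrk : IsRanked rk) : StrictMono rk := by
  let _ := Fintype.toLocallyFiniteOrder (α := Γ)
  exact (strictMono_iff_forall_covBy rk).2 fun a b h => by rw [hrk.2 a b h]; omega

theorem IsRanked.eq_bot_iff (hrk : IsRanked rk) {y : Γ} : y = ⊥ ↔ rk y = 0 := by
  refine ⟨fun h => h ▸ hrk.1, fun h => by_contra fun hy => ?_⟩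
  have := hrk.strictMono (bot_lt_iff_ne_bot.2 hy)
  rw [hrk.1] at this
  omega

theorem IsRanked.mem_rankSet_zero (hrk : IsRanked rk) {x y : Γ} :
    y ∈ rankSet rk x 0 ↔ y = x := by
  refine ⟨fun ⟨hle, hr⟩ => ?_, fun h => ⟨h.le, by rw [h, add_zero]⟩⟩
  exact hle.eq_of_not_lt fun hlt => (hrk.strictMono hlt).ne (by simpa using hr)

theorem IsRanked.exists_le_rk_eq (hrk : IsRanked rk) {x : Γ} {m : ℕ} (hm : m ≤ rk x) :
    ∃ y ≤ x, rk y = m := by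
  induction x using WellFoundedLT.induction with
  | ind x ih =>
    rcases hm.eq_or_lt with h | h
    · exact ⟨x, le_rfl, h.symm⟩
    · have hx : ⊥ < x := bot_lt_iff_ne_bot.2 fun hx => by rw [hx, hrk.1] at h; omega
      obtain ⟨c, -, hcx⟩ := exists_le_covBy_of_lt hx
      have := hrk.2 c x hcx
      obtain ⟨y, hyc, hy⟩ := ih c hcx.lt (by omega)
      exact ⟨y, hyc.trans hcx.le, hy⟩

theorem IsRanked.exists_mem_rankSet (hrk : IsRanked rk) {x : Γ} {n : ℕ} (hn : n < rk x) :
    ∃ y : Vert Γ, y.1 ∈ rankSet rk x n := by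
  obtain ⟨y, hyx, hy⟩ := hrk.exists_le_rk_eq (m := rk x - n) (Nat.sub_le _ _)
  exact ⟨⟨y, mt hrk.eq_bot_iff.1 (by omega)⟩, hyx, show rk y + n = rk x by omega⟩

theorem mem_rankSet_add {x z y : Γ} {n m : ℕ} (hz : z ∈ rankSet rk x n)
    (hy : y ∈ rankSet rk z m) : y ∈ rankSet rk x (n + m) :=
  ⟨hy.1.trans hz.1, by rw [← hz.2, ← hy.2]; ring⟩

theorem IsRanked.exists_mem_rankSet_of_succ (hrk : IsRanked rk) {x w : Γ} {n : ℕ}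
    (hw : w ∈ rankSet rk x (n + 1)) : ∃ z ∈ rankSet rk x n, w ∈ rankSet rk z 1 := by
  have hrw := hw.2
  have hwx : w < x := hw.1.lt_of_ne fun h => by rw [h] at hrw; omega
  obtain ⟨z, hwz, hzx⟩ := exists_covBy_le_of_lt hwx
  have hz := hrk.2 w z hwz
  exact ⟨z, ⟨hzx, by omega⟩, hwz.le, hz.symm⟩

theorem Uniform.apply_eq_of_mem_rankSet_one {α : Type*} (hU : Uniform rk) {a u v : Γ}
    {f : Γ → α} (hf : ∀ u ∈ rankSet rk a 1, ∀ v ∈ rankSet rk a 1, ∀ w ∈ rankSet rk u 1,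
      w ∈ rankSet rk v 1 → f u = f v)
    (hu : u ∈ rankSet rk a 1) (hv : v ∈ rankSet rk a 1) : f u = f v :=
  Setoid.eqvGen_le (s := Setoid.ker f)
    (fun u v ⟨hu, hv, w, hwu, hwv⟩ => hf u hu v hv w hwu hwv) (hU a u v hu hv)

theorem Uniform.apply_eq_of_mem_rankSet {α : Type*} (hrk : IsRanked rk) (hU : Uniform rk)
    {x : Γ} (n : ℕ) {c : Γ → α}
    (hc : ∀ z ∈ rankSet rk x n, ∀ y ∈ rankSet rk z 1, ∀ y' ∈ rankSet rk z 1, c y = c y') :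
    ∀ y ∈ rankSet rk x (n + 1), ∀ y' ∈ rankSet rk x (n + 1), c y = c y' := by
  induction n generalizing c with
  | zero => exact hc x ⟨le_rfl, rfl⟩
  | succ n ih =>
    set f : Γ → α := fun z => c (Classical.epsilon (· ∈ rankSet rk z 1))
    have hf : ∀ z ∈ rankSet rk x (n + 1), ∀ w ∈ rankSet rk z 1, f z = c w :=
      fun z hz w hw => hc z hz _ (Classical.epsilon_spec ⟨w, hw⟩) w hw
    have hfconst := ih fun a ha u hu v hv => hU.apply_eq_of_mem_rankSet_one
      (fun u hu v hv w hwu hwv =>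
        (hf u (mem_rankSet_add ha hu) w hwu).trans (hf v (mem_rankSet_add ha hv) w hwv).symm)
      hu hv
    intro y hy y' hy'
    obtain ⟨z, hz, hyz⟩ := hrk.exists_mem_rankSet_of_succ hy
    obtain ⟨z', hz', hyz'⟩ := hrk.exists_mem_rankSet_of_succ hy'
    rw [← hf z hz y hyz, ← hf z' hz' y' hyz', hfconst z hz z' hz']

end RankedPoset

section QuadraticAlgebra

variable {F} {rk : Γ → ℕ}

theorem rxnbar_eq_sum (x : Γ) (n : ℕ) :
    rxnbar F rk x n = ∑ y ∈ univ.filter (fun y : Vert Γ => y.1 ∈ rankSet rk x n), rbar F rk y :=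
  map_sum _ _ _

theorem rbar_mul_rbar_of_notMem {z y : Vert Γ} (h : y.1 ∉ rankSet rk z.1 1) :
    rbar F rk z * rbar F rk y = 0 := by
  rw [rbar, rbar, ← map_mul, RingQuot.mkAlgHom_rel F (GRel.mono z y h), map_zero]

theorem rbar_mul_rxnbar_one (z : Vert Γ) : rbar F rk z * rxnbar F rk z.1 1 = 0 := by
  rw [rbar, rxnbar, ← map_mul, RingQuot.mkAlgHom_rel F (GRel.adj z), map_zero]

theorem rbar_mul_rxnbar_succ {x : Γ} {n : ℕ} {z : Vert Γ} (hz : z.1 ∈ rankSet rk x n) :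
    rbar F rk z * rxnbar F rk x (n + 1) = 0 := by
  have hsub : univ.filter (fun y : Vert Γ => y.1 ∈ rankSet rk z.1 1) ⊆
      univ.filter (fun y : Vert Γ => y.1 ∈ rankSet rk x (n + 1)) := by
    intro y hy
    simp only [mem_filter, mem_univ, true_and] at hy ⊢
    exact mem_rankSet_add hz hy
  calc rbar F rk z * rxnbar F rk x (n + 1)
      = ∑ y ∈ univ.filter (fun y : Vert Γ => y.1 ∈ rankSet rk x (n + 1)),
          rbar F rk z * rbar F rk y := by rw [rxnbar_eq_sum, mul_sum]
    _ = ∑ y ∈ univ.filter (fun y : Vert Γ => y.1 ∈ rankSet rk z.1 1),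
          rbar F rk z * rbar F rk y :=
        (sum_subset hsub fun y _ hy => rbar_mul_rbar_of_notMem (by simpa using hy)).symm
    _ = 0 := by rw [← mul_sum, ← rxnbar_eq_sum, rbar_mul_rxnbar_one]

theorem rxnbar_mul_rxnbar_succ (x : Γ) (n : ℕ) :
    rxnbar F rk x n * rxnbar F rk x (n + 1) = 0 := by
  rw [rxnbar_eq_sum x n, sum_mul]
  exact sum_eq_zero fun z hz => rbar_mul_rxnbar_succ (mem_filter.1 hz).2

theorem Rcomp_zero : Rcomp F rk 0 = 1 := by
  rw [Rcomp, pow_zero, Submodule.map_one]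

theorem Rnk_self (k : ℕ) :
    Rnk F rk k k =
      Submodule.span F (rbar F rk '' ↑(univ.filter fun y : Vert Γ => rk y.1 = k + 1)) := by
  simp only [Rnk, Nat.sub_self, Rcomp_zero, Submodule.one_eq_span, Submodule.map_span,
    Set.image_singleton, LinearMap.mulLeft_apply, mul_one, Submodule.iSup_span]
  congr 1
  ext
  simp [eq_comm]

/-- `t`, read as the bilinear form `r_a ⊗ r_b ↦ t a b` on `W`, vanishes on `I_2`. -/
def AnnihilatesRelations (rk : Γ → ℕ) (t : Vert Γ → Vert Γ → F) : Prop :=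
  (∀ a b : Vert Γ, b.1 ∉ rankSet rk a.1 1 → t a b = 0) ∧
    ∀ a : Vert Γ, ∑ b ∈ univ.filter (fun b : Vert Γ => b.1 ∈ rankSet rk a.1 1), t a b = 0

/-- On `F × (Vert Γ → F) × F`, standing for `F ⊕ W ⊕ F`, `r_z` acts by `1 ↦ r_z` and
`r_y ↦ t z y`. -/
noncomputable def repOp (t : Vert Γ → Vert Γ → F) (z : Vert Γ) :
    Module.End F (F × (Vert Γ → F) × F) where
  toFun p := (0, p.1 • Pi.single z 1, ∑ b, t z b * p.2.1 b)
  map_add' p q := by simp [add_smul, mul_add, sum_add_distrib]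
  map_smul' a p := by simp [mul_smul, mul_sum, mul_left_comm]

theorem repOp_apply (t : Vert Γ → Vert Γ → F) (z : Vert Γ) (p : F × (Vert Γ → F) × F) :
    repOp t z p = (0, p.1 • Pi.single z 1, ∑ b, t z b * p.2.1 b) := rfl

theorem repOp_repOp (t : Vert Γ → Vert Γ → F) (z y : Vert Γ) (p : F × (Vert Γ → F) × F) :
    repOp t z (repOp t y p) = (0, 0, t z y * p.1) := by
  simp [repOp_apply, Pi.single_apply]

theorem lift_repOp_eq_of_GRel {t : Vert Γ → Vert Γ → F} (ht : AnnihilatesRelations rk t)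
    {u v : FreeAlgebra F (Vert Γ)} (h : GRel F rk u v) :
    FreeAlgebra.lift F (repOp t) u = FreeAlgebra.lift F (repOp t) v := by
  cases h with
  | mono z y hy =>
    refine LinearMap.ext fun p => ?_
    simp [gen, repOp_repOp, ht.1 z y hy]
  | adj z =>
    refine LinearMap.ext fun p => ?_
    simp only [gen, rxn, map_mul, map_sum, map_zero, FreeAlgebra.lift_ι_apply,
      Module.End.mul_apply, LinearMap.sum_apply, repOp_repOp, LinearMap.zero_apply]
    ext <;> simp [Prod.fst_sum, Prod.snd_sum, ← sum_mul, ht.2 z]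

noncomputable def repHom (t : Vert Γ → Vert Γ → F) (ht : AnnihilatesRelations rk t) :
    RGamma F rk →ₐ[F] Module.End F (F × (Vert Γ → F) × F) :=
  RingQuot.liftAlgHom F ⟨FreeAlgebra.lift F (repOp t), fun _ _ h => lift_repOp_eq_of_GRel ht h⟩

theorem repHom_rbar (t : Vert Γ → Vert Γ → F) (ht : AnnihilatesRelations rk t) (y : Vert Γ) :
    repHom t ht (rbar F rk y) = repOp t y := by
  simp [repHom, rbar, gen]

theorem annihilatesRelations_zero : AnnihilatesRelations (F := F) rk 0 :=
  ⟨fun _ _ _ => rfl, fun _ => sum_const_zero⟩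

variable (F rk) in
theorem linearIndependent_rbar : LinearIndependent F (rbar F rk) := by
  let coeff : RGamma F rk →ₗ[F] Vert Γ → F :=
    (LinearMap.fst F _ F ∘ₗ LinearMap.snd F F _) ∘ₗ
      LinearMap.applyₗ ((1, 0, 0) : F × (Vert Γ → F) × F) ∘ₗ
        (repHom 0 annihilatesRelations_zero).toLinearMap
  have hcoeff : coeff ∘ rbar F rk = Pi.basisFun F (Vert Γ) := by
    ext y : 1
    simp [coeff, repHom_rbar, repOp_apply]
  exact LinearIndependent.of_comp coeff (hcoeff ▸ (Pi.basisFun F (Vert Γ)).linearIndependent)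

theorem rbar_ne_zero (y : Vert Γ) : rbar F rk y ≠ 0 :=
  (linearIndependent_rbar F rk).ne_zero y

theorem rxnbar_ne_zero {x : Γ} {n : ℕ} {y : Vert Γ} (hy : y.1 ∈ rankSet rk x n) :
    rxnbar F rk x n ≠ 0 := by
  intro h
  rw [rxnbar_eq_sum] at h
  exact one_ne_zero (linearIndependent_iff'.1 (linearIndependent_rbar F rk) _ (fun _ => 1)
    (by simpa using h) y (by simpa using hy))

theorem repHom_rbar_mul_rbar_apply (t : Vert Γ → Vert Γ → F) (ht : AnnihilatesRelations rk t)
    (z y : Vert Γ) : repHom t ht (rbar F rk z * rbar F rk y) (1, 0, 0) = (0, 0, t z y) := by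
  simp [repHom_rbar, repOp_repOp]

theorem sum_sum_mul_eq_zero_of_mul_eq_zero {t : Vert Γ → Vert Γ → F}
    (ht : AnnihilatesRelations rk t) {S T : Finset (Vert Γ)} {a c : Vert Γ → F}
    (h : (∑ z ∈ S, a z • rbar F rk z) * ∑ y ∈ T, c y • rbar F rk y = 0) :
    ∑ z ∈ S, ∑ y ∈ T, a z * c y * t z y = 0 := by
  have := congrArg (fun s => (repHom t ht s (1, 0, 0)).2.2) h
  simp only [sum_mul, mul_sum, smul_mul_smul_comm, map_sum, map_smul, LinearMap.sum_apply,
    LinearMap.smul_apply, repHom_rbar_mul_rbar_apply, Prod.snd_sum, Prod.smul_snd, smul_eq_mul,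
    map_zero, LinearMap.zero_apply, Prod.snd_zero] at this
  rwa [sum_comm] at this

theorem apply_eq_of_rxnbar_mul_eq_zero {x : Γ} {n : ℕ} {c : Γ → F}
    (h : rxnbar F rk x n *
      ∑ y ∈ univ.filter (fun y : Vert Γ => y.1 ∈ rankSet rk x (n + 1)), c y.1 • rbar F rk y = 0)
    {z y y' : Vert Γ} (hz : z.1 ∈ rankSet rk x n) (hy : y.1 ∈ rankSet rk z.1 1)
    (hy' : y'.1 ∈ rankSet rk z.1 1) : c y.1 = c y'.1 := by
  let t : Vert Γ → Vert Γ → F := fun a b =>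
    if a = z then (if b = y then 1 else 0) - (if b = y' then 1 else 0) else 0
  have ht : AnnihilatesRelations rk t := by
    refine ⟨fun a b hb => ?_, fun a => ?_⟩
    · by_cases ha : a = z
      · subst ha
        have hby : b ≠ y := by rintro rfl; exact hb hy
        have hby' : b ≠ y' := by rintro rfl; exact hb hy'
        simp [t, hby, hby']
      · simp [t, ha]
    · by_cases ha : a = z
      · subst ha
        simp [t, sum_sub_distrib, hy, hy']
      · simp [t, ha]
  have := sum_sum_mul_eq_zero_of_mul_eq_zero ht (a := fun _ => 1) (by simpa [rxnbar_eq_sum] using h)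
  simpa [t, mul_sub, sum_sub_distrib, hz, mem_rankSet_add hz hy, mem_rankSet_add hz hy',
    sub_eq_zero] using this

theorem sum_mem_span_rxnbar_of_rxnbar_mul_eq_zero (hrk : IsRanked rk) (hU : Uniform rk)
    {x : Γ} {n : ℕ} {c : Γ → F}
    (h : rxnbar F rk x n *
      ∑ y ∈ univ.filter (fun y : Vert Γ => y.1 ∈ rankSet rk x (n + 1)), c y.1 • rbar F rk y = 0) :
    ∑ y ∈ univ.filter (fun y : Vert Γ => y.1 ∈ rankSet rk x (n + 1)), c y.1 • rbar F rk y ∈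
      Submodule.span F {rxnbar F rk x (n + 1)} := by
  have hloc : ∀ z ∈ rankSet rk x n, ∀ y ∈ rankSet rk z 1, ∀ y' ∈ rankSet rk z 1,
      c y = c y' := by
    intro z hz y hy y' hy'
    have hyz := hy.2
    have hy'z := hy'.2
    by_cases hy0 : rk y = 0
    · rw [hrk.eq_bot_iff.2 hy0, hrk.eq_bot_iff.2 (by omega : rk y' = 0)]
    · have hne : ∀ {w : Γ}, rk w ≠ 0 → w ≠ ⊥ := fun h => mt hrk.eq_bot_iff.1 h
      exact apply_eq_of_rxnbar_mul_eq_zero (z := ⟨z, hne (by omega)⟩) (y := ⟨y, hne hy0⟩)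
        (y' := ⟨y', hne (by omega)⟩) h hz hy hy'
  have hconst := hU.apply_eq_of_mem_rankSet hrk n hloc
  rcases (univ.filter fun y : Vert Γ => y.1 ∈ rankSet rk x (n + 1)).eq_empty_or_nonempty
    with hT | ⟨y₀, hy₀⟩
  · simp [hT]
  · refine Submodule.mem_span_singleton.2 ⟨c y₀.1, ?_⟩
    rw [rxnbar_eq_sum, smul_sum]
    exact sum_congr rfl fun y hy => by rw [hconst y.1 (mem_filter.1 hy).2 y₀.1 (mem_filter.1 hy₀).2]

theorem ker_mulLeft_rxnbar_inf_span_eq (hrk : IsRanked rk) (hU : Uniform rk) (x : Γ) (n : ℕ) :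
    LinearMap.ker (LinearMap.mulLeft F (rxnbar F rk x n)) ⊓
        Submodule.span F
          (rbar F rk '' ↑(univ.filter fun y : Vert Γ => y.1 ∈ rankSet rk x (n + 1))) =
      Submodule.span F {rxnbar F rk x (n + 1)} := by
  refine le_antisymm (fun s hs => ?_) ?_
  · obtain ⟨hker, hspan⟩ := Submodule.mem_inf.1 hs
    obtain ⟨c, rfl⟩ := (Submodule.mem_span_image_finset_iff_exists_fun' F).1 hspan
    have hc : ∀ y : Vert Γ, c y = Function.extend Subtype.val c 0 y.1 := fun y =>
      (Subtype.val_injective.extend_apply c 0 y).symm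
    simp only [hc, LinearMap.mem_ker, LinearMap.mulLeft_apply] at hker ⊢
    exact sum_mem_span_rxnbar_of_rxnbar_mul_eq_zero hrk hU hker
  · refine Submodule.span_le.2 (Set.singleton_subset_iff.2 ⟨?_, ?_⟩)
    · exact rxnbar_mul_rxnbar_succ x n
    · rw [rxnbar_eq_sum]
      exact Submodule.sum_mem _ fun y hy => Submodule.subset_span (Set.mem_image_of_mem _ hy)

end QuadraticAlgebra

/-- Lemma 3.7(1).  Let `Γ` be a uniform ranked poset whose
maximum element `x` has rank `d+1` (so `Γ = Γ_x`), and `R = R(Γ)`.  For every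
`0 ≤ k < d`, the set `{s ∈ R(k,k) : r_x(d−k−1)·s = 0}` equals the one-dimensional
subspace `F·r_x(d−k)` (in particular `r_x(d−k) ≠ 0` in `R`); moreover
`R(d,d) = F·r_x` is one-dimensional.  Equivalently, `H^k(R(·,k), d_Γ) ≅ F` for all
`0 ≤ k ≤ d`. -/
theorem cohomology_diagonal (rk : Γ → ℕ) (hrk : IsRanked rk) (hU : Uniform rk)
    (d : ℕ) (x : Vert Γ) (hx : ∀ y : Γ, y ≤ x.1) (hxr : rk x.1 = d + 1) :
    (∀ k : ℕ, k < d →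
      (LinearMap.ker (LinearMap.mulLeft F (rxnbar F rk x.1 (d - k - 1))) ⊓ Rnk F rk k k
          = Submodule.span F {rxnbar F rk x.1 (d - k)}) ∧
        rxnbar F rk x.1 (d - k) ≠ 0) ∧
    (Rnk F rk d d = Submodule.span F {rbar F rk x} ∧ rbar F rk x ≠ 0) := by
  have hlevel : ∀ k ≤ d, (univ.filter fun y : Vert Γ => rk y.1 = k + 1) =
      univ.filter fun y : Vert Γ => y.1 ∈ rankSet rk x.1 (d - k) := fun k hk => by
    ext y
    simp only [mem_filter, mem_univ, true_and, rankSet, Set.mem_ofPred_eq, hx y.1, hxr]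
    omega
  refine ⟨fun k hk => ?_, ?_, rbar_ne_zero x⟩
  · obtain ⟨n, hn⟩ : ∃ n, d - k = n + 1 := ⟨d - k - 1, by omega⟩
    obtain ⟨y, hy⟩ := hrk.exists_mem_rankSet (x := x.1) (n := n + 1) (by omega)
    rw [Rnk_self, hlevel k hk.le, hn, Nat.add_sub_cancel]
    exact ⟨ker_mulLeft_rxnbar_inf_span_eq hrk hU x.1 n, rxnbar_ne_zero hy⟩
  · have htop : (univ.filter fun y : Vert Γ => y.1 ∈ rankSet rk x.1 0) = {x} := by
      ext y
      simp [hrk.mem_rankSet_zero, Subtype.ext_iff]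
    rw [Rnk_self, hlevel d le_rfl, Nat.sub_self, htop, coe_singleton, Set.image_singleton]
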